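/- arXiv:1508.04619 — 3 statements merged into one kernel-verified Lean document; each statement's English description precedes it below -/
import Mathlib

section
/- For every n ≥ 1 and every integer t ≥ 0, the number of vectors λ ∈ ℤ^n satisfying 0 ≤ λ_1 and i·λ_{i+1} ≥ (i+1)·λ_i for all 1 ≤ i ≤ n−1, together with λ_n ≤ n·t, equals (t+1)^n. (That is, the Ehrhart polynomial of the lecture hall polytope P_n = {λ ∈ L_n : λ_n ≤ n} is i(P_n, t) = (t+1)^n.) -/
/-- A lecture hall partition of length `n`: a vector `λ ∈ ℤⁿ` (indexed `0,…,n-1`,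
corresponding to `λ_1,…,λ_n`) with `0 ≤ λ_1` and `i·λ_{i+1} ≥ (i+1)·λ_i` for `1 ≤ i ≤ n-1`. -/
def IsLectureHall (n : ℕ) (l : Fin n → ℤ) : Prop :=
  (∀ h : 0 < n, 0 ≤ l ⟨0, h⟩) ∧
  ∀ i : ℕ, ∀ h : i + 1 < n,
    ((i : ℤ) + 1) * l ⟨i + 1, h⟩ ≥ ((i : ℤ) + 2) * l ⟨i, by omega⟩

/-!
Let `N(n, m)` count the lecture hall partitions of length `n` with largest part at most `m`.
Those with largest part exactly `m + 1` are, after deleting that part, the lecture hall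
partitions of length `n - 1` with largest part at most `⌊(n - 1)(m + 1) / n⌋`, so
`N(n, m + 1) = N(n, m) + N(n - 1, ⌊(n - 1)(m + 1) / n⌋)`.
Writing `m = qn + r` with `0 ≤ r < n`, the closed form `(q + 1)^(n - r) (q + 2)^r` satisfies the
same recursion and initial values, and at `m = nt` it is `(t + 1)^n`.
-/

namespace IsLectureHall

variable {n : ℕ} {l : Fin n → ℤ}

theorem nonneg (H : IsLectureHall n l) (i : Fin n) : 0 ≤ l i := by
  obtain ⟨i, hi⟩ := i
  induction i with
  | zero => exact H.1 hi
  | succ i ih =>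
    have hstep := H.2 i hi
    have hprev := ih (by omega)
    nlinarith

theorem monotone (H : IsLectureHall n l) : Monotone l := by
  cases n with
  | zero => exact fun i => i.elim0
  | succ n =>
    refine Fin.monotone_iff_le_succ.2 fun ⟨i, hi⟩ => ?_
    have hstep := H.2 i (by omega)
    have hprev := H.nonneg ⟨i, by omega⟩
    show l ⟨i, _⟩ ≤ l ⟨i + 1, _⟩
    nlinarith

end IsLectureHall

theorem isLectureHall_succ_iff {n : ℕ} {l : Fin (n + 2) → ℤ} :
    IsLectureHall (n + 2) l ↔ IsLectureHall (n + 1) (Fin.init l) ∧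
      (n + 2) * Fin.init l (Fin.last n) ≤ (n + 1) * l (Fin.last (n + 1)) := by
  constructor
  · rintro ⟨hfirst, hstep⟩
    exact ⟨⟨fun _ => hfirst (by omega), fun i hi => hstep i (by omega)⟩, hstep n (by omega)⟩
  · rintro ⟨⟨hfirst, hstep⟩, hlast⟩
    refine ⟨fun _ => hfirst (by omega), fun i hi => ?_⟩
    rcases Nat.lt_or_ge (i + 1) (n + 1) with hi' | hi'
    · exact hstep i hi'
    · obtain rfl : i = n := by omega
      exact hlast

noncomputable def lectureHallCount (n : ℕ) (m : ℤ) : ℕ :=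
  Nat.card {l : Fin (n + 1) → ℤ // IsLectureHall (n + 1) l ∧ l (Fin.last n) ≤ m}

theorem finite_lectureHall_le (n : ℕ) (m : ℤ) :
    Finite {l : Fin (n + 1) → ℤ // IsLectureHall (n + 1) l ∧ l (Fin.last n) ≤ m} := by
  refine Set.Finite.to_subtype ((Set.Finite.pi fun _ => Set.finite_Icc 0 m).subset ?_)
  rintro l ⟨H, hlast⟩ i -
  exact ⟨H.nonneg i, (H.monotone (Fin.le_last i)).trans hlast⟩

theorem lectureHallCount_of_neg (n : ℕ) {m : ℤ} (hm : m < 0) : lectureHallCount n m = 0 := by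
  rw [lectureHallCount, Nat.card_eq_zero]
  exact Or.inl ⟨fun ⟨l, H, hlast⟩ => (H.nonneg _).not_gt (hlast.trans_lt hm)⟩

theorem lectureHallCount_zero (m : ℕ) : lectureHallCount 0 m = m + 1 := by
  have e : {l : Fin 1 → ℤ // IsLectureHall 1 l ∧ l (Fin.last 0) ≤ m} ≃ Set.Icc (0 : ℤ) m :=
    (Equiv.funUnique (Fin 1) ℤ).subtypeEquiv fun l => by
      simp [IsLectureHall, Fin.last, Fin.eq_zero]
  rw [lectureHallCount, Nat.card_congr e]
  simp

theorem isLectureHall_succ_iff_of_last_eq {n : ℕ} {l : Fin (n + 2) → ℤ} {c : ℤ}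
    (hc : l (Fin.last (n + 1)) = c) :
    IsLectureHall (n + 2) l ↔
      IsLectureHall (n + 1) (Fin.init l) ∧ Fin.init l (Fin.last n) ≤ (n + 1) * c / (n + 2) := by
  rw [isLectureHall_succ_iff, hc, Int.le_ediv_iff_mul_le (by positivity), mul_comm]

def lectureHallLastEquiv (n : ℕ) (c : ℤ) :
    {l : Fin (n + 2) → ℤ // IsLectureHall (n + 2) l ∧ l (Fin.last (n + 1)) = c} ≃
      {l : Fin (n + 1) → ℤ //
        IsLectureHall (n + 1) l ∧ l (Fin.last n) ≤ (n + 1) * c / (n + 2)} where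
  toFun l := ⟨Fin.init l.1, (isLectureHall_succ_iff_of_last_eq l.2.2).1 l.2.1⟩
  invFun l := ⟨Fin.snoc l.1 c, by
    have hc : Fin.snoc (α := fun _ => ℤ) l.1 c (Fin.last (n + 1)) = c := Fin.snoc_last _ _
    refine ⟨(isLectureHall_succ_iff_of_last_eq hc).2 ?_, hc⟩
    rw [Fin.init_snoc]
    exact l.2⟩
  left_inv l := by
    obtain ⟨l, H, rfl⟩ := l
    exact Subtype.ext (Fin.snoc_init_self l)
  right_inv l := Subtype.ext (Fin.init_snoc (α := fun _ => ℤ) _ _)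

theorem lectureHallCount_succ (n : ℕ) (m : ℤ) :
    lectureHallCount (n + 1) (m + 1) =
      lectureHallCount (n + 1) m + lectureHallCount n ((n + 1) * (m + 1) / (n + 2)) := by
  have hsplit :
      {l : Fin (n + 2) → ℤ // IsLectureHall (n + 2) l ∧ l (Fin.last (n + 1)) ≤ m + 1} ≃
      {l : Fin (n + 2) → ℤ // IsLectureHall (n + 2) l ∧ l (Fin.last (n + 1)) ≤ m} ⊕
        {l : Fin (n + 2) → ℤ // IsLectureHall (n + 2) l ∧ l (Fin.last (n + 1)) = m + 1} :=
    open Classical in (Equiv.subtypeEquivRight fun l => by grind).trans <|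
      subtypeOrEquiv (fun l => IsLectureHall (n + 2) l ∧ l (Fin.last (n + 1)) ≤ m)
        (fun l => IsLectureHall (n + 2) l ∧ l (Fin.last (n + 1)) = m + 1) <|
        Pi.disjoint_iff.2 fun _ => Prop.disjoint_iff.2 fun ⟨⟨_, hle⟩, ⟨_, heq⟩⟩ => by omega
  have := finite_lectureHall_le (n + 1) m
  have := (lectureHallLastEquiv n (m + 1)).finite_iff.2 (finite_lectureHall_le n _)
  rw [lectureHallCount, Nat.card_congr hsplit, Nat.card_sum,
    Nat.card_congr (lectureHallLastEquiv n _)]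
  rfl

def lectureHallClosedForm (n m : ℕ) : ℕ := (m / n + 1) ^ (n - m % n) * (m / n + 2) ^ (m % n)

theorem lectureHallClosedForm_eq {n m q r d : ℕ} (hn : n = r + d + 1) (hm : m = n * q + r) :
    lectureHallClosedForm n m = (q + 1) ^ (d + 1) * (q + 2) ^ r := by
  have hr : r < n := by omega
  have hdiv : m / n = q := by rw [hm, Nat.mul_add_div (by omega), Nat.div_eq_of_lt hr, add_zero]
  have hmod : m % n = r := by rw [hm, Nat.mul_add_mod, Nat.mod_eq_of_lt hr]
  rw [lectureHallClosedForm, hdiv, hmod, show n - r = d + 1 by omega]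

theorem lectureHallClosedForm_mul (n q : ℕ) :
    lectureHallClosedForm (n + 1) ((n + 1) * q) = (q + 1) ^ (n + 1) := by
  rw [lectureHallClosedForm_eq (m := (n + 1) * q) (q := q) (r := 0) (d := n) (by omega) rfl,
    pow_zero, mul_one]

theorem lectureHallClosedForm_succ (n m : ℕ) :
    lectureHallClosedForm (n + 2) (m + 1) =
      lectureHallClosedForm (n + 2) m +
        lectureHallClosedForm (n + 1) ((n + 1) * (m + 1) / (n + 2)) := by
  obtain ⟨q, r, hr, rfl⟩ : ∃ q r, r < n + 2 ∧ m = (n + 2) * q + r :=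
    ⟨m / (n + 2), m % (n + 2), Nat.mod_lt _ (by omega), (Nat.div_add_mod m (n + 2)).symm⟩
  rcases Nat.lt_or_ge r (n + 1) with hr' | hr'
  · obtain ⟨d, rfl⟩ : ∃ d, n = r + d := ⟨n - r, by omega⟩
    have hM : (r + d + 1) * ((r + d + 2) * q + r + 1) / (r + d + 2) = (r + d + 1) * q + r :=
      Nat.div_eq_of_lt_le (by nlinarith) (by nlinarith)
    rw [hM, lectureHallClosedForm_eq (q := q) (r := r + 1) (d := d) (by omega) (by ring),
      lectureHallClosedForm_eq (q := q) (r := r) (d := d + 1) (by omega) rfl,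
      lectureHallClosedForm_eq (q := q) (r := r) (d := d) (by omega) rfl]
    ring
  · obtain rfl : r = n + 1 := by omega
    have hM : (n + 1) * ((n + 2) * q + (n + 1) + 1) / (n + 2) = (n + 1) * (q + 1) :=
      Nat.div_eq_of_eq_mul_left (by omega) (by ring)
    rw [hM, lectureHallClosedForm_eq (q := q + 1) (r := 0) (d := n + 1) (by omega) (by ring),
      lectureHallClosedForm_eq (q := q) (r := n + 1) (d := 0) (by omega) rfl,
      lectureHallClosedForm_eq (q := q + 1) (r := 0) (d := n) (by omega) (by ring)]
    ring

theorem lectureHallCount_eq_closedForm (n m : ℕ) :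
    lectureHallCount n m = lectureHallClosedForm (n + 1) m := by
  induction n generalizing m with
  | zero =>
    simp [lectureHallCount_zero, lectureHallClosedForm, Nat.mod_one]
  | succ n ih =>
    induction m with
    | zero =>
      have h := lectureHallCount_succ n (-1)
      norm_num [lectureHallCount_of_neg] at h
      rw [Nat.cast_zero, h, ← Nat.cast_zero, ih]
      simp [lectureHallClosedForm]
    | succ m ihm =>
      have hM : ((n : ℤ) + 1) * ((m : ℤ) + 1) / ((n : ℤ) + 2) =
          (((n + 1) * (m + 1) / (n + 2) : ℕ) : ℤ) := by
        push_cast; rfl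
      rw [Nat.cast_succ, lectureHallCount_succ, ihm, hM, ih, lectureHallClosedForm_succ]

/-- The Ehrhart polynomial of the lecture hall polytope `P_n = {λ ∈ L_n : λ_n ≤ n}`
is `i(P_n, t) = (t+1)^n`. -/
theorem lectureHall_polytope_ehrhart (n t : ℕ) (hn : 1 ≤ n) :
    Nat.card {l : Fin n → ℤ //
      IsLectureHall n l ∧ l ⟨n - 1, by omega⟩ ≤ (n : ℤ) * t} = (t + 1) ^ n := by
  obtain ⟨n, rfl⟩ : ∃ k, n = k + 1 := ⟨n - 1, by omega⟩
  have hlast : (⟨n + 1 - 1, by omega⟩ : Fin (n + 1)) = Fin.last n := Fin.ext (by simp)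
  have hbound : ((n + 1 : ℕ) : ℤ) * t = (((n + 1) * t : ℕ) : ℤ) := by push_cast; ring
  simp only [hlast, hbound]
  rw [← lectureHallCount, lectureHallCount_eq_closedForm, lectureHallClosedForm_mul]
end

section
/- For every n ≥ 2 and every integer t ≥ 0, the number of lecture hall partitions λ ∈ ℤ^n with λ_n − λ_{n−1} = t equals (t+1)^{n−1}. -/
namespace LHaux

lemma nonneg {n : ℕ} {l : Fin n → ℤ} (h : IsLectureHall n l) :
    ∀ k (hk : k < n), 0 ≤ l ⟨k, hk⟩ := by
  intro k
  induction k with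
  | zero => intro hk; exact h.1 hk
  | succ k ih =>
    intro hk
    have h2 := h.2 k hk
    have h3 := ih (by omega)
    nlinarith [h3]

lemma step {n : ℕ} {l : Fin n → ℤ} (h : IsLectureHall n l) (k : ℕ) (hk : k + 1 < n) :
    l ⟨k, by omega⟩ ≤ l ⟨k + 1, hk⟩ := by
  have h2 := h.2 k hk
  have h3 := nonneg h k (by omega)
  nlinarith

lemma mono {n : ℕ} {l : Fin n → ℤ} (h : IsLectureHall n l) :
    ∀ j (hj : j < n) k (hk : k < n), k ≤ j → l ⟨k, hk⟩ ≤ l ⟨j, hj⟩ := by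
  intro j
  induction j with
  | zero => intro hj k hk hkj; interval_cases k; exact le_refl _
  | succ j ih =>
    intro hj k hk hkj
    rcases Nat.lt_or_ge k (j+1) with h1 | h1
    · exact le_trans (ih (by omega) k hk (by omega)) (step h j hj)
    · have : k = j + 1 := by omega
      subst this; exact le_refl _

/-- lecture hall partitions of length n+1 with last part ≤ M -/
def A (n M : ℕ) : Type :=
  {l : Fin (n+1) → ℤ // IsLectureHall (n+1) l ∧ l (Fin.last n) ≤ (M : ℤ)}

instance finA (n M : ℕ) : Finite (A n M) := by
  have key : ∀ (l : A n M) (i : Fin (n+1)), l.1 i ∈ Set.Icc (0:ℤ) (M:ℤ) := by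
    rintro ⟨l, hl, hM⟩ i
    refine ⟨nonneg hl i.1 i.2, le_trans ?_ hM⟩
    exact mono hl n (by omega) i.1 i.2 (by omega)
  have : Finite (Set.Icc (0:ℤ) (M:ℤ)) := Set.finite_Icc _ _
  apply Finite.of_injective
    (fun l : A n M => fun i => (⟨l.1 i, key l i⟩ : Set.Icc (0:ℤ) (M:ℤ)))
  intro a b hab
  apply Subtype.ext
  funext i
  exact congrArg Subtype.val (congrFun hab i)

lemma isLectureHall_snoc {n : ℕ} (f : Fin (n+1) → ℤ) (x : ℤ) :
    IsLectureHall (n+2) (Fin.snoc f x) ↔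
      IsLectureHall (n+1) f ∧ ((n:ℤ)+1) * x ≥ ((n:ℤ)+2) * f (Fin.last n) := by
  have hlt : ∀ (j) (h : j < n+2) (h2 : j < n+1),
      (Fin.snoc f x : Fin (n+2) → ℤ) ⟨j, h⟩ = f ⟨j, h2⟩ := by
    intro j h h2
    have e : (⟨j, h⟩ : Fin (n+2)) = Fin.castSucc ⟨j, h2⟩ := rfl
    rw [e, Fin.snoc_castSucc]
  have hlast : ∀ (h : n + 1 < n + 2), (Fin.snoc f x : Fin (n+2) → ℤ) ⟨n+1, h⟩ = x := by
    intro h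
    have e : (⟨n+1, h⟩ : Fin (n+2)) = Fin.last (n+1) := rfl
    rw [e, Fin.snoc_last]
  constructor
  · intro h
    refine ⟨⟨fun h0 => ?_, fun i hi => ?_⟩, ?_⟩
    · have := h.1 (by omega)
      rwa [hlt 0 (by omega) h0] at this
    · have := h.2 i (by omega)
      rwa [hlt (i+1) (by omega) hi, hlt i (by omega) (by omega)] at this
    · have := h.2 n (by omega)
      rwa [hlast (by omega), hlt n (by omega) (by omega)] at this
  · rintro ⟨hf, hx⟩
    constructor
    · intro h0
      rw [hlt 0 (by omega) (by omega)]
      exact hf.1 (by omega)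
    · intro i hi
      rcases Nat.lt_or_ge (i+1) (n+1) with h1 | h1
      · rw [hlt (i+1) hi h1, hlt i (by omega) (by omega)]
        exact hf.2 i h1
      · have hi' : i = n := by omega
        subst hi'
        rw [hlast hi, hlt i (by omega) (by omega)]
        exact hx

/-- splitting off the last-value-(M+1) part -/
def splitEquiv (n M : ℕ) :
    A n (M+1) ≃
      (A n M) ⊕ {l : Fin (n+1) → ℤ // IsLectureHall (n+1) l ∧ l (Fin.last n) = ((M:ℤ)+1)} where
  toFun l :=
    if h : l.1 (Fin.last n) ≤ (M : ℤ) then Sum.inl ⟨l.1, l.2.1, h⟩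
    else Sum.inr ⟨l.1, l.2.1, by
      have h2 := l.2.2
      push_cast at h2 ⊢
      omega⟩
  invFun s :=
    match s with
    | Sum.inl l => ⟨l.1, l.2.1, by have := l.2.2; push_cast; omega⟩
    | Sum.inr l => ⟨l.1, l.2.1, by have := l.2.2; push_cast; omega⟩
  left_inv l := by
    by_cases h : l.1 (Fin.last n) ≤ (M : ℤ)
    · simp only [dif_pos h]
      rfl
    · simp only [dif_neg h]
      rfl
  right_inv s := by
    match s with
    | Sum.inl l =>
      have h : l.1 (Fin.last n) ≤ (M : ℤ) := l.2.2
      simp only [dif_pos h]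
      rfl
    | Sum.inr l =>
      have h : ¬ (l.1 (Fin.last n) ≤ (M : ℤ)) := by
        have := l.2.2; omega
      simp only [dif_neg h]


/-- the last-value-(M+1) part is equivalent to shorter ones bounded by
`(n+1)*(M+1)/(n+2)` -/
lemma div_bounds (n M : ℕ) :
    ((n:ℤ)+2) * (((n+1)*(M+1)/(n+2) : ℕ) : ℤ) ≤ ((n:ℤ)+1) * ((M:ℤ)+1) ∧
    ((n:ℤ)+1) * ((M:ℤ)+1) < ((n:ℤ)+2) * ((((n+1)*(M+1)/(n+2) : ℕ) : ℤ) + 1) := by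
  have h1 : (n+2) * ((n+1)*(M+1)/(n+2)) ≤ (n+1)*(M+1) :=
    Nat.le.intro (Nat.div_add_mod ((n+1)*(M+1)) (n+2))
  have h2 : (n+1)*(M+1) < (n+2) * ((n+1)*(M+1)/(n+2)) + (n+2) := by
    have hd := Nat.div_add_mod ((n+1)*(M+1)) (n+2)
    have hm : ((n+1)*(M+1)) % (n+2) < n + 2 := Nat.mod_lt _ (by omega)
    calc (n+1)*(M+1) = (n+2) * ((n+1)*(M+1)/(n+2)) + ((n+1)*(M+1)) % (n+2) := hd.symm
      _ < (n+2) * ((n+1)*(M+1)/(n+2)) + (n+2) := Nat.add_lt_add_left hm _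
  constructor
  · exact_mod_cast h1
  · have : ((n:ℕ)+1) * (M+1) < (n+2) * (((n+1)*(M+1)/(n+2)) + 1) := by
      rw [Nat.mul_add, Nat.mul_one]; exact h2
    exact_mod_cast this

/-- the last-value-(M+1) part is equivalent to shorter ones bounded by
`(n+1)*(M+1)/(n+2)` -/
def lastEquiv (n M : ℕ) :
    {l : Fin (n+2) → ℤ // IsLectureHall (n+2) l ∧ l (Fin.last (n+1)) = ((M:ℤ)+1)} ≃
      A n ((n+1)*(M+1)/(n+2)) where
  toFun l := ⟨Fin.init l.1, by
    have h := l.2.1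
    have hlast := l.2.2
    have hs : Fin.snoc (Fin.init l.1) (l.1 (Fin.last (n+1))) = l.1 := Fin.snoc_init_self _
    rw [← hs, isLectureHall_snoc] at h
    refine ⟨h.1, ?_⟩
    have h2 := h.2
    rw [hlast] at h2
    obtain ⟨hb1, hb2⟩ := div_bounds n M
    set y := Fin.init l.1 (Fin.last n) with hy
    by_contra hc
    push_neg at hc
    have hc2 : (((n+1)*(M+1)/(n+2) : ℕ) : ℤ) + 1 ≤ y := by omega
    have : ((n:ℤ)+2) * ((((n+1)*(M+1)/(n+2) : ℕ) : ℤ) + 1) ≤ ((n:ℤ)+2) * y :=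
      mul_le_mul_of_nonneg_left hc2 (by positivity)
    linarith⟩
  invFun g := ⟨Fin.snoc g.1 ((M:ℤ)+1), by
    obtain ⟨hb1, hb2⟩ := div_bounds n M
    refine ⟨?_, ?_⟩
    · rw [isLectureHall_snoc]
      refine ⟨g.2.1, ?_⟩
      have hb := g.2.2
      have : ((n:ℤ)+2) * g.1 (Fin.last n) ≤ ((n:ℤ)+2) * (((n+1)*(M+1)/(n+2) : ℕ) : ℤ) :=
        mul_le_mul_of_nonneg_left hb (by positivity)
      linarith
    · rw [Fin.snoc_last]⟩
  left_inv l := by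
    apply Subtype.ext
    have hlast := l.2.2
    conv_rhs => rw [← Fin.snoc_init_self l.1]
    rw [hlast]
  right_inv g := by
    apply Subtype.ext
    simp


def Phi (n M : ℕ) : ℕ := (M / n + 1) ^ (n - M % n) * (M / n + 2) ^ (M % n)

lemma div_helper {N : ℕ} (q s : ℕ) (hN : 0 < N) (hs : s < N) : (N*q + s)/N = q := by
  rw [Nat.mul_add_div hN, Nat.div_eq_of_lt hs, Nat.add_zero]

lemma mod_helper {N : ℕ} (q s : ℕ) (hs : s < N) : (N*q + s) % N = s := by
  rw [Nat.mul_add_mod, Nat.mod_eq_of_lt hs]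

lemma phi_eval {N : ℕ} (t r : ℕ) (hN : 0 < N) (hr : r < N) :
    Phi N (N*t + r) = (t+1)^(N-r) * (t+2)^r := by
  rw [Phi, div_helper t r hN hr, mod_helper t r hr]

lemma phi_rec (n M : ℕ) :
    Phi (n+2) M + Phi (n+1) ((n+1)*(M+1)/(n+2)) = Phi (n+2) (M+1) := by
  obtain ⟨t, r, hr, rfl⟩ : ∃ t r, r < n + 2 ∧ M = (n+2)*t + r :=
    ⟨M/(n+2), M%(n+2), Nat.mod_lt _ (by omega), (Nat.div_add_mod M (n+2)).symm⟩
  have hM' : (n+1) * ((n+2)*t + r + 1) / (n+2) = (n+1)*t + r := by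
    have h1 : (n+1) * ((n+2)*t + r + 1) = (n+2)*((n+1)*t + r) + (n+1-r) := by
      rcases Nat.le_of_lt_succ hr with h
      zify [h]
      ring
    rw [h1, div_helper _ _ (by omega) (by omega)]
  rw [hM']
  rcases Nat.lt_or_ge (r+1) (n+2) with hc | hc
  · have e1 : Phi (n+1) ((n+1)*t + r) = (t+1)^(n+1-r) * (t+2)^r :=
      phi_eval t r (by omega) (by omega)
    have e2 : Phi (n+2) ((n+2)*t + r) = (t+1)^(n+2-r) * (t+2)^r :=
      phi_eval t r (by omega) hr
    have e3 : Phi (n+2) ((n+2)*t + r + 1) = (t+1)^(n+2-(r+1)) * (t+2)^(r+1) := by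
      have : (n+2)*t + r + 1 = (n+2)*t + (r+1) := by omega
      rw [this]; exact phi_eval t (r+1) (by omega) hc
    rw [e1, e2, e3]
    have h4 : n+2-r = (n+2-(r+1)) + 1 := by omega
    have h5 : n+1-r = n+2-(r+1) := by omega
    rw [h4, h5, pow_succ, pow_succ]
    ring
  · have hrv : r = n + 1 := by omega
    subst hrv
    have e1 : Phi (n+1) ((n+1)*t + (n+1)) = (t+2)^(n+1) := by
      have h : (n+1)*t + (n+1) = (n+1)*(t+1) + 0 := by ring
      rw [h, phi_eval (t+1) 0 (by omega) (by omega)]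
      simp
    have e2 : Phi (n+2) ((n+2)*t + (n+1)) = (t+1) * (t+2)^(n+1) := by
      rw [phi_eval t (n+1) (by omega) (by omega)]
      have : n+2-(n+1) = 1 := by omega
      rw [this, pow_one]
    have e3 : Phi (n+2) ((n+2)*t + (n+1) + 1) = (t+2)^(n+2) := by
      have h : (n+2)*t + (n+1) + 1 = (n+2)*(t+1) + 0 := by ring
      rw [h, phi_eval (t+1) 0 (by omega) (by omega)]
      simp
    rw [e1, e2, e3, pow_succ]
    ring


/-- base case: length 1 -/
def baseEquiv (M : ℕ) : A 0 M ≃ Fin (M+1) where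
  toFun l := ⟨(l.1 (Fin.last 0)).toNat, by
    have h1 : 0 ≤ l.1 (Fin.last 0) := l.2.1.1 (by omega)
    have h2 := l.2.2
    omega⟩
  invFun k := ⟨fun _ => ((k : ℕ) : ℤ), ⟨fun _ => by positivity, fun i hi => by omega⟩, by
    have := k.2
    show ((k.1 : ℕ) : ℤ) ≤ (M : ℤ)
    omega⟩
  left_inv l := by
    apply Subtype.ext
    funext i
    have hi : i = Fin.last 0 := Fin.ext (by omega)
    subst hi
    have h1 : 0 ≤ l.1 (Fin.last 0) := l.2.1.1 (by omega)
    show (((l.1 (Fin.last 0)).toNat : ℕ) : ℤ) = l.1 (Fin.last 0)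
    exact Int.toNat_of_nonneg h1
  right_inv k := by
    apply Fin.ext
    show (((k.1 : ℕ) : ℤ)).toNat = k.1
    simp

/-- base case: bound 0 forces everything to be 0 -/
def zeroEquiv (n : ℕ) : A n 0 ≃ Unit where
  toFun _ := ()
  invFun _ := ⟨fun _ => 0, ⟨fun _ => le_refl _, fun i hi => by simp⟩, by simp⟩
  left_inv l := by
    apply Subtype.ext
    funext i
    have h1 := nonneg l.2.1 i.1 i.2
    have h2 : l.1 ⟨i.1, i.2⟩ ≤ l.1 (Fin.last n) :=
      mono l.2.1 n (by omega) i.1 i.2 (by omega)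
    have h3 := l.2.2
    show (0 : ℤ) = l.1 i
    have he : l.1 i = l.1 ⟨i.1, i.2⟩ := rfl
    omega
  right_inv _ := rfl

lemma card_A : ∀ n M : ℕ, Nat.card (A n M) = Phi (n+1) M := by
  intro n
  induction n with
  | zero =>
    intro M
    rw [Nat.card_congr (baseEquiv M)]
    simp [Phi, Nat.mod_one]
  | succ n ih =>
    intro M
    induction M with
    | zero =>
      rw [Nat.card_congr (zeroEquiv (n+1))]
      simp [Phi, Nat.zero_div, Nat.zero_mod]
    | succ M ihM =>
      have hfin2 : Finite {l : Fin (n+2) → ℤ //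
          IsLectureHall (n+2) l ∧ l (Fin.last (n+1)) = ((M:ℤ)+1)} :=
        Finite.of_equiv _ (lastEquiv n M).symm
      have : Nat.card (A (n+1) (M+1)) =
          Nat.card (A (n+1) M) + Nat.card {l : Fin (n+2) → ℤ //
            IsLectureHall (n+2) l ∧ l (Fin.last (n+1)) = ((M:ℤ)+1)} := by
        rw [Nat.card_congr (splitEquiv (n+1) M), Nat.card_sum]
      rw [this, ihM, Nat.card_congr (lastEquiv n M), ih ((n+1)*(M+1)/(n+2))]
      have hcast : ((M:ℤ)+1) = ((M+1 : ℕ) : ℤ) := by push_cast; ring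
      exact phi_rec n M

end LHaux

/-- For `n ≥ 2` and `t ≥ 0`, the number of lecture hall partitions `λ ∈ ℤⁿ` with
`λ_n - λ_{n-1} = t` equals `(t+1)^{n-1}`. -/
theorem lectureHall_degree_t_count (n t : ℕ) (hn : 2 ≤ n) :
    Nat.card {l : Fin n → ℤ //
      IsLectureHall n l ∧ l ⟨n - 1, by omega⟩ - l ⟨n - 2, by omega⟩ = (t : ℤ)} =
    (t + 1) ^ (n - 1) := by
  obtain ⟨m, rfl⟩ : ∃ m, n = m + 2 := ⟨n - 2, by omega⟩
  have key : ∀ y : ℤ, (((m:ℤ)+1) * (y + t) ≥ ((m:ℤ)+2) * y) ↔ y ≤ (((m+1)*t : ℕ) : ℤ) := by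
    intro y
    constructor
    · intro h
      push_cast
      nlinarith
    · intro h
      push_cast at h
      nlinarith
  have e : {l : Fin (m+2) → ℤ //
      IsLectureHall (m+2) l ∧ l ⟨m+2-1, by omega⟩ - l ⟨m+2-2, by omega⟩ = (t : ℤ)} ≃
      LHaux.A m ((m+1)*t) := {
    toFun := fun l => ⟨Fin.init l.1, by
      have h := l.2.1
      have hd := l.2.2
      have hs : Fin.snoc (Fin.init l.1) (l.1 (Fin.last (m+1))) = l.1 := Fin.snoc_init_self _
      rw [← hs, LHaux.isLectureHall_snoc] at h
      refine ⟨h.1, ?_⟩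
      have h2 := h.2
      have e1 : l.1 ⟨m+2-1, by omega⟩ = l.1 (Fin.last (m+1)) := rfl
      have e2 : Fin.init l.1 (Fin.last m) = l.1 ⟨m+2-2, by omega⟩ := rfl
      have hlast : l.1 (Fin.last (m+1)) = Fin.init l.1 (Fin.last m) + (t : ℤ) := by omega
      rw [hlast] at h2
      exact (key _).1 h2⟩
    invFun := fun g => ⟨Fin.snoc g.1 (g.1 (Fin.last m) + t), by
      refine ⟨?_, ?_⟩
      · rw [LHaux.isLectureHall_snoc]
        exact ⟨g.2.1, (key _).2 g.2.2⟩
      · have v1 : (Fin.snoc g.1 (g.1 (Fin.last m) + t) : Fin (m+2) → ℤ) ⟨m+2-1, by omega⟩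
            = g.1 (Fin.last m) + t := by
          have e1 : (⟨m+2-1, by omega⟩ : Fin (m+2)) = Fin.last (m+1) := rfl
          rw [e1]
          exact Fin.snoc_last _ _
        have v2 : (Fin.snoc g.1 (g.1 (Fin.last m) + t) : Fin (m+2) → ℤ) ⟨m+2-2, by omega⟩
            = g.1 (Fin.last m) := by
          have e3 : (⟨m+2-2, by omega⟩ : Fin (m+2)) = Fin.castSucc (Fin.last m) := rfl
          rw [e3]
          exact Fin.snoc_castSucc _ _ _
        omega⟩
    left_inv := fun l => by
      apply Subtype.ext
      show Fin.snoc (Fin.init l.1) (Fin.init l.1 (Fin.last m) + (t:ℤ)) = l.1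
      have hd := l.2.2
      have e1 : l.1 ⟨m+2-1, by omega⟩ = l.1 (Fin.last (m+1)) := rfl
      have e2 : Fin.init l.1 (Fin.last m) = l.1 ⟨m+2-2, by omega⟩ := rfl
      have hv : Fin.init l.1 (Fin.last m) + (t:ℤ) = l.1 (Fin.last (m+1)) := by omega
      rw [hv]
      exact Fin.snoc_init_self l.1
    right_inv := fun g => by
      apply Subtype.ext
      simp }
  rw [Nat.card_congr e, LHaux.card_A]
  have h0 : (m+1)*t = (m+1)*t + 0 := rfl
  rw [h0, LHaux.phi_eval t 0 (by omega) (by omega)]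
  simp
end

section
/- For every n ≥ 2 and every subset A ⊆ {1, …, n−1}, the vector v_A is not a nonnegative integer combination of the vectors {v_B : B ⊆ {1, …, n−1}, B ≠ A}; equivalently, v_A does not lie in the additive submonoid of ℤ^n generated by H_n ∖ {v_A}. Hence H_n = {v_A : A ⊆ {1, …, n−1}} is the minimal generating set (Hilbert basis) of the monoid of lecture hall partitions. -/
/-- For a subset `A = {i_1 < i_2 < ⋯ < i_k} ⊆ {1,…,n-1}`, the vector
`v_A = (0,…,0, i_1, i_2, …, i_k, i_k + 1) ∈ ℤⁿ`: `n - k - 1` leading zeros, then the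
elements of `A` in increasing order, and finally `max(A) + 1` (with `v_∅ = (0,…,0,1)`). -/
def vA (n : ℕ) (A : Finset ℕ) : Fin n → ℤ := fun j =>
  if (j : ℕ) = n - 1 then ((A.sort (· ≤ ·)).getLastD 0 : ℤ) + 1
  else if n - 1 - A.card ≤ (j : ℕ) then
    (((A.sort (· ≤ ·)).getD ((j : ℕ) - (n - 1 - A.card)) 0 : ℕ) : ℤ)
  else 0

theorem AddSubmonoid.mem_of_mem_closure_of_map_eq_one {M N : Type*} [AddMonoid M]
    [AddMonoidWithOne N] [CharZero N] (φ : M →+ N) {S : Set M} (hS : ∀ s ∈ S, φ s = 1)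
    {x : M} (hx : x ∈ AddSubmonoid.closure S) (hφx : φ x = 1) : x ∈ S := by
  obtain ⟨l, hlS, rfl⟩ := AddSubmonoid.exists_list_of_mem_closure hx
  have hlen : l.length = 1 := by
    rw [map_list_sum, List.map_congr_left (fun s hs => hS s (hlS s hs)), List.map_const',
      List.sum_replicate, nsmul_one, Nat.cast_eq_one] at hφx
    exact hφx
  obtain ⟨s, rfl⟩ := List.length_eq_one_iff.mp hlen
  simpa using hlS s (List.mem_singleton_self s)

lemma vA_apply_last (n : ℕ) (hn : 0 < n) (B : Finset ℕ) :
    vA n B ⟨n - 1, by omega⟩ = ((B.sort (· ≤ ·)).getLastD 0 : ℤ) + 1 := by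
  simp [vA]

lemma vA_apply_penultimate (n : ℕ) (hn : 2 ≤ n) (B : Finset ℕ) (hB : B.card ≤ n - 1) :
    vA n B ⟨n - 2, by omega⟩ = ((B.sort (· ≤ ·)).getLastD 0 : ℤ) := by
  have hlen : (B.sort (· ≤ ·)).length = B.card := Finset.length_sort _
  simp only [vA, if_neg (show n - 2 ≠ n - 1 by omega)]
  by_cases hB0 : B.card = 0
  · rw [if_neg (by omega), List.eq_nil_of_length_eq_zero (hlen.trans hB0)]
    rfl
  · rw [if_pos (by omega), show n - 2 - (n - 1 - B.card) = (B.sort (· ≤ ·)).length - 1 by omega]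
    simp [List.getLastD_eq_getLast?, List.getLast?_eq_getElem?, List.getD]

lemma vA_apply_last_sub_penultimate (n : ℕ) (hn : 2 ≤ n) (B : Finset ℕ)
    (hB : B ⊆ Finset.Icc 1 (n - 1)) :
    vA n B ⟨n - 1, by omega⟩ - vA n B ⟨n - 2, by omega⟩ = 1 := by
  have hcard : B.card ≤ n - 1 := by simpa using Finset.card_le_card hB
  rw [vA_apply_last n (by omega), vA_apply_penultimate n hn B hcard]
  ring

/-- For every `n ≥ 2` and `A ⊆ {1,…,n-1}`, the vector `v_A` is not a nonnegative integer
combination of the other vectors `v_B` (`B ≠ A`): it does not lie in the additive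
submonoid generated by `H_n ∖ {v_A}`. Hence `H_n` is the Hilbert basis of the monoid of
lecture hall partitions. -/
theorem vA_not_in_closure_of_others (n : ℕ) (hn : 2 ≤ n) (A : Finset ℕ)
    (hA : A ⊆ Finset.Icc 1 (n - 1)) :
    vA n A ∉ AddSubmonoid.closure
      ({v : Fin n → ℤ | ∃ B : Finset ℕ, B ⊆ Finset.Icc 1 (n - 1) ∧ v = vA n B}
        \ {vA n A}) := by
  intro hmem
  let φ : (Fin n → ℤ) →+ ℤ :=
    Pi.evalAddMonoidHom (fun _ => ℤ) ⟨n - 1, by omega⟩ -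
      Pi.evalAddMonoidHom (fun _ => ℤ) ⟨n - 2, by omega⟩
  have hφ : ∀ B ⊆ Finset.Icc 1 (n - 1), φ (vA n B) = 1 :=
    vA_apply_last_sub_penultimate n hn
  have hgen := AddSubmonoid.mem_of_mem_closure_of_map_eq_one φ
    (by rintro _ ⟨⟨B, hB, rfl⟩, -⟩; exact hφ B hB) hmem (hφ A hA)
  exact hgen.2 rfl
end
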